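/- arXiv:1210.8273 — 4 statements merged into one kernel-verified Lean document; each statement's English description precedes it below -/
import Mathlib

section
/- Let k ≥ 2 and let Γ be a k-regular graph. Then the energy per vertex of Γ is at most (k + (k²−k)√(k−1))/(k²−k+1). -/
set_option linter.unusedSectionVars false
open Finset

section Defs
variable {V : Type*} [Fintype V] [DecidableEq V]

theorem adjMatrix_isHermitian (G : SimpleGraph V) [DecidableRel G.Adj] :
    (SimpleGraph.adjMatrix ℝ G).IsHermitian := by
  ext i j
  simp [Matrix.conjTranspose_apply, SimpleGraph.adjMatrix_apply, SimpleGraph.adj_comm]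

/-- The eigenvalues of the adjacency matrix of a graph. -/
noncomputable def adjEigs (G : SimpleGraph V) : V → ℝ := by
  classical exact (adjMatrix_isHermitian G).eigenvalues

/-- The spectrum of the graph, as a multiset of real eigenvalues. -/
noncomputable def adjSpectrum (G : SimpleGraph V) : Multiset ℝ :=
  Finset.univ.val.map (adjEigs G)

/-- The energy per vertex of a graph. -/
noncomputable def epv (G : SimpleGraph V) : ℝ :=
  (∑ i, |adjEigs G i|) / (Fintype.card V)

/-- The disjoint union of an indexed family of graphs. -/
def sigmaGraph {ι : Type*} {W : ι → Type*} (G : ∀ i, SimpleGraph (W i)) :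
    SimpleGraph (Σ i, W i) where
  Adj x y := ∃ (i : ι) (a b : W i), (G i).Adj a b ∧ x = ⟨i, a⟩ ∧ y = ⟨i, b⟩
  symm := by constructor; rintro x y ⟨i, a, b, h, rfl, rfl⟩; exact ⟨i, b, a, h.symm, rfl, rfl⟩
  loopless := by
    constructor
    rintro x ⟨i, a, b, h, rfl, h2⟩
    simp only [Sigma.mk.inj_iff, heq_eq_eq, true_and] at h2
    exact h.ne h2

/-- The bipartite incidence graph of a point-line geometry. -/
def incidenceGraph (P L : Type*) [Membership P L] : SimpleGraph (P ⊕ L) where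
  Adj x y := (∃ p l, p ∈ l ∧ x = Sum.inl p ∧ y = Sum.inr l) ∨
             (∃ p l, p ∈ l ∧ x = Sum.inr l ∧ y = Sum.inl p)
  symm := by
    constructor
    rintro x y (⟨p, l, h, rfl, rfl⟩ | ⟨p, l, h, rfl, rfl⟩)
    · exact Or.inr ⟨p, l, h, rfl, rfl⟩
    · exact Or.inl ⟨p, l, h, rfl, rfl⟩
  loopless := by constructor; rintro x (⟨p, l, h, rfl, h2⟩ | ⟨p, l, h, rfl, h2⟩) <;> simp at h2

/-- The bipartite double of a graph. -/
def bipartiteDouble (G : SimpleGraph V) : SimpleGraph (V ⊕ V) where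
  Adj x y := (∃ u v, G.Adj u v ∧ x = Sum.inl u ∧ y = Sum.inr v) ∨
             (∃ u v, G.Adj u v ∧ x = Sum.inr u ∧ y = Sum.inl v)
  symm := by
    constructor
    rintro x y (⟨u, v, h, rfl, rfl⟩ | ⟨u, v, h, rfl, rfl⟩)
    · exact Or.inr ⟨v, u, h.symm, rfl, rfl⟩
    · exact Or.inl ⟨v, u, h.symm, rfl, rfl⟩
  loopless := by constructor; rintro x (⟨u, v, h, rfl, h2⟩ | ⟨u, v, h, rfl, h2⟩) <;> simp at h2

end Defs

/-!
Put `s = √(k - 1)` and let `R` be the claimed bound. An even quartic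
`p t = R + b (t² - k) - c (t⁴ - (2k² - k))` with `b, c ≥ 0` majorizes `|t|` on `[-k, k]`; it
touches `|t|` at `±s` and meets it at `±k`. Every adjacency eigenvalue lies in `[-k, k]` by
Gershgorin, the eigenvalues have second moment `k` (the trace of `A²`) and fourth moment at least
`2k² - k` (each vertex starts at least that many closed walks of length 4). Summing
`|λ| ≤ p λ` over the spectrum gives `∑ |λ| ≤ n R`.
-/

open Finset Matrix SimpleGraph

namespace Matrix.IsHermitian

variable {𝕜 n : Type*} [RCLike 𝕜] [Fintype n] [DecidableEq n] {A : Matrix n n 𝕜}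

theorem trace_pow_eq_sum_eigenvalues_pow (hA : A.IsHermitian) (m : ℕ) :
    (A ^ m).trace = ∑ i, (hA.eigenvalues i : 𝕜) ^ m := by
  conv_lhs => rw [hA.spectral_theorem, ← map_pow, Unitary.conjStarAlgAut_apply, trace_mul_cycle,
    Unitary.coe_star_mul_self, one_mul, diagonal_pow, trace_diagonal]
  simp

theorem abs_eigenvalues_le (hA : A.IsHermitian) {r : ℝ} (hr : ∀ i, ∑ j, ‖A i j‖ ≤ r) (i : n) :
    |hA.eigenvalues i| ≤ r := by
  have hμ : Module.End.HasEigenvalue (toLin' A) (hA.eigenvalues i : 𝕜) := by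
    refine Module.End.HasEigenvalue.of_mem_spectrum ?_
    rw [spectrum_toLin', hA.spectrum_eq_image_range]
    exact ⟨_, ⟨i, rfl⟩, rfl⟩
  obtain ⟨j, hj⟩ := eigenvalue_mem_ball hμ
  rw [mem_closedBall_iff_norm] at hj
  calc |hA.eigenvalues i| = ‖(hA.eigenvalues i : 𝕜)‖ := (RCLike.norm_ofReal _).symm
    _ ≤ ‖(hA.eigenvalues i : 𝕜) - A j j‖ + ‖A j j‖ := norm_le_norm_sub_add _ _
    _ ≤ ∑ l ∈ univ.erase j, ‖A j l‖ + ‖A j j‖ := by gcongr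
    _ = ∑ l, ‖A j l‖ := sum_erase_add _ _ (mem_univ j)
    _ ≤ r := hr j

end Matrix.IsHermitian

noncomputable def regularEnergyBound (k : ℝ) : ℝ :=
  (k + (k ^ 2 - k) * √(k - 1)) / (k ^ 2 - k + 1)

theorem regularEnergyBound_nonneg {k : ℝ} (hk : 1 ≤ k) : 0 ≤ regularEnergyBound k := by
  have : 0 ≤ k ^ 2 - k := by nlinarith
  unfold regularEnergyBound
  apply div_nonneg <;> nlinarith [Real.sqrt_nonneg (k - 1)]

theorem exists_quartic_majorant_abs {k : ℝ} (hk : 1 < k) :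
    ∃ b c : ℝ, 0 ≤ b ∧ 0 ≤ c ∧ ∀ t : ℝ, |t| ≤ k →
      |t| ≤ regularEnergyBound k + b * (t ^ 2 - k) - c * (t ^ 4 - (2 * k ^ 2 - k)) := by
  -- `p t - t` vanishes doubly at `s` and simply at `k`: these are the absolute values of the
  -- eigenvalues of the incidence graph of a projective plane of order `k - 1`, where the bound
  -- is attained. The witnesses `b, c` are forced by these root conditions.
  obtain ⟨s, hs, rfl⟩ : ∃ s : ℝ, 0 < s ∧ k = s ^ 2 + 1 :=
    ⟨√(k - 1), Real.sqrt_pos.mpr (by linarith), by rw [Real.sq_sqrt (by linarith)]; ring⟩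
  set k := s ^ 2 + 1 with hk_def
  have hR : regularEnergyBound k = (k + (k ^ 2 - k) * s) / (k ^ 2 - k + 1) := by
    rw [regularEnergyBound, hk_def, add_sub_cancel_right, Real.sqrt_sq hs.le]
  set D := k ^ 2 - k + 1 with hD
  have hDpos : 0 < D := by nlinarith
  set c := (k - s) ^ 2 / (2 * s * D ^ 2) with hc
  refine ⟨1 / (2 * s) + 2 * c * s ^ 2, c, by positivity, by positivity, fun t ht => ?_⟩
  set u := |t|
  rw [← sq_abs t, show t ^ 4 = u ^ 4 by rw [← abs_pow, abs_of_nonneg (by positivity)]]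
  have key : (regularEnergyBound k + (1 / (2 * s) + 2 * c * s ^ 2) * (u ^ 2 - k)
      - c * (u ^ 4 - (2 * k ^ 2 - k)) - u) * (2 * s * D ^ 2)
      = (k - s) ^ 2 * (u - s) ^ 2 * ((k - u) * (u + 2 * s + k)) := by
    rw [hR, hc]
    field_simp
    rw [hD, hk_def]
    ring
  have : 0 ≤ (k - s) ^ 2 * (u - s) ^ 2 * ((k - u) * (u + 2 * s + k)) := by
    have : 0 ≤ k - u := by linarith
    positivity
  nlinarith [show 0 < 2 * s * D ^ 2 by positivity]

theorem sum_abs_le_of_moments {ι : Type*} [Fintype ι] {k : ℝ} (hk : 1 < k) {x : ι → ℝ}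
    (hx : ∀ i, |x i| ≤ k) (h2 : ∑ i, x i ^ 2 ≤ Fintype.card ι * k)
    (h4 : Fintype.card ι * (2 * k ^ 2 - k) ≤ ∑ i, x i ^ 4) :
    ∑ i, |x i| ≤ Fintype.card ι * regularEnergyBound k := by
  obtain ⟨b, c, hb, hc, hmaj⟩ := exists_quartic_majorant_abs hk
  calc ∑ i, |x i|
      ≤ ∑ i, (regularEnergyBound k + b * (x i ^ 2 - k) - c * (x i ^ 4 - (2 * k ^ 2 - k))) :=
        sum_le_sum fun i _ => hmaj _ (hx i)
    _ = Fintype.card ι * regularEnergyBound k + b * (∑ i, x i ^ 2 - Fintype.card ι * k)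
          - c * (∑ i, x i ^ 4 - Fintype.card ι * (2 * k ^ 2 - k)) := by
        simp only [sum_sub_distrib, sum_add_distrib, ← mul_sum, sum_const, card_univ,
          nsmul_eq_mul]
        ring
    _ ≤ Fintype.card ι * regularEnergyBound k := by
        nlinarith [mul_nonneg hb (sub_nonneg.2 h2), mul_nonneg hc (sub_nonneg.2 h4)]

namespace SimpleGraph

variable {V : Type*} [Fintype V] {G : SimpleGraph V} [DecidableRel G.Adj]

namespace IsRegularOfDegree

variable {k : ℕ} {α : Type*}

theorem sum_adjMatrix_apply [NonAssocSemiring α] (hG : G.IsRegularOfDegree k) (i : V) :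
    ∑ j, G.adjMatrix α i j = k := by
  simpa [mulVec, dotProduct] using
    adjMatrix_mulVec_const_apply_of_regular (a := (1 : α)) hG (v := i)

theorem sum_norm_adjMatrix_apply [SeminormedRing α] [NormOneClass α] (hG : G.IsRegularOfDegree k)
    (i : V) : ∑ j, ‖G.adjMatrix α i j‖ = k := by
  rw [← hG.sum_adjMatrix_apply (α := ℝ) i]
  refine sum_congr rfl fun j _ => ?_
  by_cases h : G.Adj i j <;> simp [h]

variable [DecidableEq V]

theorem adjMatrix_sq_apply_self [Semiring α] (hG : G.IsRegularOfDegree k) (i : V) :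
    (G.adjMatrix α ^ 2) i i = k := by
  rw [sq, adjMatrix_mul_self_apply_self, hG i]

theorem sum_adjMatrix_sq_apply [Semiring α] (hG : G.IsRegularOfDegree k) (i : V) :
    ∑ j, (G.adjMatrix α ^ 2) i j = k ^ 2 := by
  simp only [sq, adjMatrix_mul_apply]
  rw [sum_comm, sum_congr rfl fun u _ => hG.sum_adjMatrix_apply u, sum_const,
    card_neighborFinset_eq_degree, hG i, nsmul_eq_mul]

theorem trace_adjMatrix_sq [Semiring α] (hG : G.IsRegularOfDegree k) :
    (G.adjMatrix α ^ 2).trace = Fintype.card V * k := by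
  simp only [Matrix.trace, diag_apply, hG.adjMatrix_sq_apply_self, sum_const, card_univ,
    nsmul_eq_mul]

theorem le_adjMatrix_pow_four_apply_self [CommRing α] [LinearOrder α] [IsStrictOrderedRing α]
    (hG : G.IsRegularOfDegree k) (i : V) :
    2 * (k : α) ^ 2 - k ≤ (G.adjMatrix α ^ 4) i i := by
  have hsymm : (G.adjMatrix α ^ 2)ᵀ = G.adjMatrix α ^ 2 := by
    rw [transpose_pow, transpose_adjMatrix]
  have h4 : (G.adjMatrix α ^ 4) i i = ∑ j, (G.adjMatrix α ^ 2) i j ^ 2 := by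
    rw [show G.adjMatrix α ^ 4 = G.adjMatrix α ^ 2 * G.adjMatrix α ^ 2 by rw [← pow_add],
      mul_apply]
    refine sum_congr rfl fun j _ => ?_
    rw [sq ((G.adjMatrix α ^ 2) i j), ← transpose_apply (G.adjMatrix α ^ 2) j i, hsymm]
  -- the entries of `A ^ 2` count walks, so they are natural numbers, each at most its square
  have hw : ∀ j, 0 ≤ (G.adjMatrix α ^ 2) i j ^ 2 - (G.adjMatrix α ^ 2) i j := fun j => by
    rw [adjMatrix_pow_apply_eq_card_walk, sub_nonneg]
    exact_mod_cast Nat.le_self_pow two_ne_zero _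
  have hdiag := single_le_sum (fun j _ => hw j) (mem_univ i)
  rw [sum_sub_distrib, hG.sum_adjMatrix_sq_apply, hG.adjMatrix_sq_apply_self] at hdiag
  rw [h4]
  linarith

theorem le_trace_adjMatrix_pow_four [CommRing α] [LinearOrder α] [IsStrictOrderedRing α]
    (hG : G.IsRegularOfDegree k) :
    Fintype.card V * (2 * (k : α) ^ 2 - k) ≤ (G.adjMatrix α ^ 4).trace := by
  calc Fintype.card V * (2 * (k : α) ^ 2 - k) = ∑ _i : V, (2 * (k : α) ^ 2 - k) := by
        rw [sum_const, card_univ, nsmul_eq_mul]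
    _ ≤ ∑ i, (G.adjMatrix α ^ 4) i i :=
        sum_le_sum fun i _ => hG.le_adjMatrix_pow_four_apply_self i

end IsRegularOfDegree

theorem adjEigs_eq_eigenvalues [DecidableEq V] :
    adjEigs G = (adjMatrix_isHermitian G).eigenvalues := by
  unfold adjEigs
  congr!

end SimpleGraph

/-- For k ≥ 2, the energy per vertex of a k-regular graph is at most
(k + (k²−k)√(k−1))/(k²−k+1). -/
theorem epv_le_of_regular {V : Type*} [Fintype V] [DecidableEq V]
    (G : SimpleGraph V) [DecidableRel G.Adj] (k : ℕ) (hk : 2 ≤ k) (hreg : G.IsRegularOfDegree k) :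
    epv G ≤ ((k : ℝ) + ((k : ℝ) ^ 2 - k) * Real.sqrt ((k : ℝ) - 1)) /
      ((k : ℝ) ^ 2 - k + 1) := by
  have hk₁ : (1 : ℝ) < k := by exact_mod_cast hk
  have hA := adjMatrix_isHermitian G
  have h2 := hA.trace_pow_eq_sum_eigenvalues_pow 2
  have h4 := hA.trace_pow_eq_sum_eigenvalues_pow 4
  simp only [RCLike.ofReal_real_eq_id, id_eq] at h2 h4
  rw [epv, adjEigs_eq_eigenvalues]
  refine div_le_of_le_mul₀ (Nat.cast_nonneg _) (regularEnergyBound_nonneg hk₁.le) ?_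
  rw [mul_comm]
  refine sum_abs_le_of_moments hk₁
    (hA.abs_eigenvalues_le fun i => (hreg.sum_norm_adjMatrix_apply i).le) ?_ ?_
  · exact (h2.symm.trans hreg.trace_adjMatrix_sq).le
  · exact h4 ▸ hreg.le_trace_adjMatrix_pow_four
end

section
/- Fix k ≥ 2 and m ≥ 1, and consider real variables m₁, m₂ ≥ 0 with m₁ + m₂ ≤ m and θ₁ < θ₂ < k with θ₁, θ₂ ≥ 0, subject to m₁θ₁² + m₂θ₂² + (m−m₁−m₂)k² = mk and m₁θ₁⁴ + m₂θ₂⁴ + (m−m₁−m₂)k⁴ = mk(2k−1). Then the function m₁θ₁ + m₂θ₂ + (m−m₁−m₂)k has no maximizer over this feasible set with m₁ > 0 and m₂ > 0. -/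
set_option linter.unusedSectionVars false
open Finset

/-!
Write the objective as `m k - ∑ mᵢ (k - θᵢ) = m k - ∑ wᵢ / (k + θᵢ)` with weights
`wᵢ = mᵢ (k² - θᵢ²)`. The two moment constraints say exactly that `∑ wᵢ = m k (k - 1)` and that
the `wᵢ`-weighted mean of `θᵢ²` is `k - 1`; positivity of the weights forces `k > 1`. Since
`t ↦ 1 / (k + √t)` is strictly convex, two distinct values `θ₁ < θ₂` give a strictly smaller
objective than the single value `√(k - 1)` carrying the same total weight, and that single value
is itself feasible.
-/

/-- Strict Jensen inequality for `t ↦ 1 / (c + √t)` at two points. -/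
theorem two_point_jensen_div_add {c w₁ w₂ s₁ s₂ s : ℝ} (hc : 0 < c) (hw₁ : 0 < w₁) (hw₂ : 0 < w₂)
    (hs₁ : 0 ≤ s₁) (hs₁₂ : s₁ < s₂) (hs : 0 ≤ s)
    (hmean : w₁ * s₁ ^ 2 + w₂ * s₂ ^ 2 = (w₁ + w₂) * s ^ 2) :
    (w₁ + w₂) / (c + s) < w₁ / (c + s₁) + w₂ / (c + s₂) := by
  have hsq : s₁ ^ 2 < s₂ ^ 2 := by nlinarith
  have hs₁s : s₁ < s := by
    refine lt_of_pow_lt_pow_left₀ 2 hs ?_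
    nlinarith [mul_pos hw₂ (sub_pos.mpr hsq)]
  have hss₂ : s < s₂ := by
    refine lt_of_pow_lt_pow_left₀ 2 (hs₁.trans hs₁₂.le) ?_
    nlinarith [mul_pos hw₁ (sub_pos.mpr hsq)]
  -- `X (s + s₁) = Y (s₂ + s)` with `s + s₁ < s₂ + s` forces `Y < X`.
  set X := w₁ * (s - s₁)
  set Y := w₂ * (s₂ - s)
  have hY : 0 < Y := mul_pos hw₂ (by linarith)
  have hXY : X * (s + s₁) = Y * (s₂ + s) := by linear_combination -hmean
  have hYX : Y < X := by nlinarith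
  have hYX' : Y * (c + s₁) < X * (c + s₂) := by nlinarith
  have hd₁ : 0 < c + s₁ := by linarith
  have hd : 0 < c + s := by linarith
  have hd₂ : 0 < c + s₂ := by linarith
  have h₁ : w₁ / (c + s₁) - w₁ / (c + s) = X / ((c + s₁) * (c + s)) := by
    field_simp; ring
  have h₂ : w₂ / (c + s) - w₂ / (c + s₂) = Y / ((c + s) * (c + s₂)) := by
    field_simp; ring
  have h₃ : Y / ((c + s) * (c + s₂)) < X / ((c + s₁) * (c + s)) := by
    rw [div_lt_div_iff₀ (mul_pos hd hd₂) (mul_pos hd₁ hd)]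
    nlinarith [mul_pos hd hd]
  rw [add_div]
  linarith

/-- Feasibility in the relaxed problem: multiplicities `m₁, m₂` of the values `θ₁ < θ₂`, and the
remaining multiplicity `m - m₁ - m₂` at `k`, matching the second and fourth spectral moments. -/
def TwoValueFeasible (k m m₁ m₂ θ₁ θ₂ : ℝ) : Prop :=
  0 ≤ m₁ ∧ 0 ≤ m₂ ∧ m₁ + m₂ ≤ m ∧ 0 ≤ θ₁ ∧ θ₁ < θ₂ ∧ θ₂ < k ∧
    m₁ * θ₁ ^ 2 + m₂ * θ₂ ^ 2 + (m - m₁ - m₂) * k ^ 2 = m * k ∧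
    m₁ * θ₁ ^ 4 + m₂ * θ₂ ^ 4 + (m - m₁ - m₂) * k ^ 4 = m * k * (2 * k - 1)

def twoValueObjective (k m m₁ m₂ θ₁ θ₂ : ℝ) : ℝ :=
  m₁ * θ₁ + m₂ * θ₂ + (m - m₁ - m₂) * k

namespace TwoValueFeasible

variable {k m m₁ m₂ θ₁ θ₂ : ℝ}

theorem weight_sum (h : TwoValueFeasible k m m₁ m₂ θ₁ θ₂) :
    m₁ * (k ^ 2 - θ₁ ^ 2) + m₂ * (k ^ 2 - θ₂ ^ 2) = m * k * (k - 1) := by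
  obtain ⟨-, -, -, -, -, -, h₂, -⟩ := h
  linear_combination -h₂

theorem weight_sq_mean (h : TwoValueFeasible k m m₁ m₂ θ₁ θ₂) :
    m₁ * (k ^ 2 - θ₁ ^ 2) * θ₁ ^ 2 + m₂ * (k ^ 2 - θ₂ ^ 2) * θ₂ ^ 2 =
      (m₁ * (k ^ 2 - θ₁ ^ 2) + m₂ * (k ^ 2 - θ₂ ^ 2)) * (k - 1) := by
  obtain ⟨-, -, -, -, -, -, h₂, h₄⟩ := h
  linear_combination (k ^ 2 + k - 1) * h₂ - h₄

theorem twoValueObjective_eq (h : TwoValueFeasible k m m₁ m₂ θ₁ θ₂) :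
    twoValueObjective k m m₁ m₂ θ₁ θ₂ =
      m * k - (m₁ * (k ^ 2 - θ₁ ^ 2) / (k + θ₁) + m₂ * (k ^ 2 - θ₂ ^ 2) / (k + θ₂)) := by
  obtain ⟨-, -, -, hθ₁, hθ₁₂, hθ₂k, -⟩ := h
  have : k + θ₁ ≠ 0 := by linarith
  have : k + θ₂ ≠ 0 := by linarith
  unfold twoValueObjective
  field_simp
  ring

theorem one_lt (h : TwoValueFeasible k m m₁ m₂ θ₁ θ₂) (hm : 0 ≤ m) (hm₁ : 0 < m₁) :
    1 < k := by
  have hsum := h.weight_sum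
  obtain ⟨-, hm₂, -, hθ₁, hθ₁₂, hθ₂k, -⟩ := h
  have hw₁ : 0 < m₁ * (k ^ 2 - θ₁ ^ 2) := mul_pos hm₁ (by nlinarith)
  have hw₂ : 0 ≤ m₂ * (k ^ 2 - θ₂ ^ 2) := mul_nonneg hm₂ (by nlinarith)
  nlinarith [mul_nonneg hm (hθ₁.trans (hθ₁₂.trans hθ₂k).le)]

end TwoValueFeasible

noncomputable def oneValueMult (k m : ℝ) : ℝ :=
  m * (k ^ 2 - k) / (k ^ 2 - k + 1)

section OneValue

variable {k m : ℝ}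

theorem oneValueMult_mul_sq_sub (hk : 1 < k) :
    oneValueMult k m * (k ^ 2 - √(k - 1) ^ 2) = m * k * (k - 1) := by
  have : k ^ 2 - k + 1 ≠ 0 := by nlinarith
  rw [Real.sq_sqrt (by linarith), oneValueMult, div_mul_eq_mul_div, div_eq_iff this]
  ring

theorem twoValueFeasible_oneValue (hk : 1 < k) (hm : 0 ≤ m) :
    TwoValueFeasible k m 0 (oneValueMult k m) 0 √(k - 1) := by
  have hD : 0 < k ^ 2 - k + 1 := by nlinarith
  have hmult := oneValueMult_mul_sq_sub (m := m) hk
  have hμ : √(k - 1) ^ 2 = k - 1 := Real.sq_sqrt (by linarith)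
  refine ⟨le_rfl, ?_, ?_, le_rfl, Real.sqrt_pos.2 (by linarith), ?_, ?_, ?_⟩
  · exact div_nonneg (mul_nonneg hm (by nlinarith)) hD.le
  · rw [zero_add, oneValueMult, div_le_iff₀ hD]
    nlinarith
  · nlinarith [Real.sqrt_nonneg (k - 1)]
  · linear_combination -hmult
  · rw [show √(k - 1) ^ 4 = (k - 1) ^ 2 by rw [show (4 : ℕ) = 2 * 2 from rfl, pow_mul, hμ]]
    rw [hμ] at hmult
    linear_combination -(k ^ 2 + k - 1) * hmult

theorem twoValueObjective_oneValue (hk : 1 < k) :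
    twoValueObjective k m 0 (oneValueMult k m) 0 √(k - 1) =
      m * k - m * k * (k - 1) / (k + √(k - 1)) := by
  have hpos : 0 < k + √(k - 1) := by positivity
  have hfactor : (k ^ 2 - √(k - 1) ^ 2) / (k + √(k - 1)) = k - √(k - 1) := by
    rw [div_eq_iff hpos.ne']
    ring
  rw [← oneValueMult_mul_sq_sub hk, mul_div_assoc, hfactor, twoValueObjective]
  ring

end OneValue

theorem TwoValueFeasible.twoValueObjective_lt_oneValue {k m m₁ m₂ θ₁ θ₂ : ℝ}
    (h : TwoValueFeasible k m m₁ m₂ θ₁ θ₂) (hm : 0 ≤ m) (hm₁ : 0 < m₁) (hm₂ : 0 < m₂) :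
    twoValueObjective k m m₁ m₂ θ₁ θ₂ < twoValueObjective k m 0 (oneValueMult k m) 0 √(k - 1) := by
  have hk := h.one_lt hm hm₁
  have hmean := h.weight_sq_mean
  rw [h.twoValueObjective_eq, twoValueObjective_oneValue hk, ← h.weight_sum]
  obtain ⟨-, -, -, hθ₁, hθ₁₂, hθ₂k, -⟩ := h
  rw [← Real.sq_sqrt (by linarith : 0 ≤ k - 1)] at hmean
  have := two_point_jensen_div_add (c := k) (s := √(k - 1))
    (w₁ := m₁ * (k ^ 2 - θ₁ ^ 2)) (w₂ := m₂ * (k ^ 2 - θ₂ ^ 2)) (by linarith)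
    (mul_pos hm₁ (by nlinarith)) (mul_pos hm₂ (by nlinarith)) hθ₁ hθ₁₂ (Real.sqrt_nonneg _)
    (by linear_combination hmean)
  linarith

theorem no_two_value_maximizer_general (k m : ℕ) :
    ¬ ∃ m₁ m₂ θ₁ θ₂ : ℝ,
      (0 ≤ m₁ ∧ 0 ≤ m₂ ∧ m₁ + m₂ ≤ (m : ℝ) ∧ 0 ≤ θ₁ ∧ θ₁ < θ₂ ∧ θ₂ < (k : ℝ) ∧
        m₁ * θ₁ ^ 2 + m₂ * θ₂ ^ 2 + ((m : ℝ) - m₁ - m₂) * (k : ℝ) ^ 2 = (m : ℝ) * k ∧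
        m₁ * θ₁ ^ 4 + m₂ * θ₂ ^ 4 + ((m : ℝ) - m₁ - m₂) * (k : ℝ) ^ 4 =
          (m : ℝ) * k * (2 * (k : ℝ) - 1)) ∧
      0 < m₁ ∧ 0 < m₂ ∧
      (∀ n₁ n₂ μ₁ μ₂ : ℝ,
        (0 ≤ n₁ ∧ 0 ≤ n₂ ∧ n₁ + n₂ ≤ (m : ℝ) ∧ 0 ≤ μ₁ ∧ μ₁ < μ₂ ∧ μ₂ < (k : ℝ) ∧
          n₁ * μ₁ ^ 2 + n₂ * μ₂ ^ 2 + ((m : ℝ) - n₁ - n₂) * (k : ℝ) ^ 2 = (m : ℝ) * k ∧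
          n₁ * μ₁ ^ 4 + n₂ * μ₂ ^ 4 + ((m : ℝ) - n₁ - n₂) * (k : ℝ) ^ 4 =
            (m : ℝ) * k * (2 * (k : ℝ) - 1)) →
        n₁ * μ₁ + n₂ * μ₂ + ((m : ℝ) - n₁ - n₂) * k ≤
          m₁ * θ₁ + m₂ * θ₂ + ((m : ℝ) - m₁ - m₂) * k) := by
  rintro ⟨m₁, m₂, θ₁, θ₂, hfeas, hm₁, hm₂, hmax⟩
  change TwoValueFeasible k m m₁ m₂ θ₁ θ₂ at hfeas
  have hk := hfeas.one_lt m.cast_nonneg hm₁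
  exact (hfeas.twoValueObjective_lt_oneValue m.cast_nonneg hm₁ hm₂).not_ge
    (hmax _ _ _ _ (twoValueFeasible_oneValue hk m.cast_nonneg))

/-- the relaxed two-value optimization problem has no maximizer with
m₁ > 0 and m₂ > 0. -/
theorem no_two_value_maximizer (k m : ℕ) (hk : 2 ≤ k) (hm : 1 ≤ m) :
    ¬ ∃ m₁ m₂ θ₁ θ₂ : ℝ,
      (0 ≤ m₁ ∧ 0 ≤ m₂ ∧ m₁ + m₂ ≤ (m : ℝ) ∧ 0 ≤ θ₁ ∧ θ₁ < θ₂ ∧ θ₂ < (k : ℝ) ∧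
        m₁ * θ₁ ^ 2 + m₂ * θ₂ ^ 2 + ((m : ℝ) - m₁ - m₂) * (k : ℝ) ^ 2 = (m : ℝ) * k ∧
        m₁ * θ₁ ^ 4 + m₂ * θ₂ ^ 4 + ((m : ℝ) - m₁ - m₂) * (k : ℝ) ^ 4 =
          (m : ℝ) * k * (2 * (k : ℝ) - 1)) ∧
      0 < m₁ ∧ 0 < m₂ ∧
      (∀ n₁ n₂ μ₁ μ₂ : ℝ,
        (0 ≤ n₁ ∧ 0 ≤ n₂ ∧ n₁ + n₂ ≤ (m : ℝ) ∧ 0 ≤ μ₁ ∧ μ₁ < μ₂ ∧ μ₂ < (k : ℝ) ∧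
          n₁ * μ₁ ^ 2 + n₂ * μ₂ ^ 2 + ((m : ℝ) - n₁ - n₂) * (k : ℝ) ^ 2 = (m : ℝ) * k ∧
          n₁ * μ₁ ^ 4 + n₂ * μ₂ ^ 4 + ((m : ℝ) - n₁ - n₂) * (k : ℝ) ^ 4 =
            (m : ℝ) * k * (2 * (k : ℝ) - 1)) →
        n₁ * μ₁ + n₂ * μ₂ + ((m : ℝ) - n₁ - n₂) * k ≤
          m₁ * θ₁ + m₂ * θ₂ + ((m : ℝ) - m₁ - m₂) * k) :=
  no_two_value_maximizer_general k m
end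

section
/- Fix k ≥ 2 and m = t(k²−k+1) for a positive integer t. For real variables ℓ and θ with 0 ≤ ℓ ≤ m, 0 ≤ θ ≤ k, subject to ℓθ² + (m−ℓ)k² = mk and ℓθ⁴ + (m−ℓ)k⁴ ≥ mk(2k−1), the objective ℓθ + (m−ℓ)k is maximized uniquely at θ = √(k−1) and ℓ = m − t, giving maximal value tk + t(k²−k)√(k−1). -/
set_option linter.unusedSectionVars false
open Finset

/-! Eliminating ℓ through the equality constraint, the objective becomes
`MK − MK(K−1)/(K+θ)`, strictly increasing in `θ ≥ 0`, while the quartic constraint becomes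
`θ² ≤ K − 1`. So the maximum sits at `θ = √(K−1)`, where the equality constraint forces
`ℓ = M − T` once `M = T(K² − K + 1)`, since then `K² − θ² = M/T`. -/

namespace OneValueOptimization

section CommRing

variable {R : Type*} [CommRing R] {M K ℓ θ : R}

theorem quartic_sub_eq (hc : ℓ * θ ^ 2 + (M - ℓ) * K ^ 2 = M * K) :
    ℓ * θ ^ 4 + (M - ℓ) * K ^ 4 - M * K * (2 * K - 1) =
      M * K * (K - 1) * (K - 1 - θ ^ 2) := by
  linear_combination (K ^ 2 + θ ^ 2) * hc

theorem add_mul_objective_eq (hc : ℓ * θ ^ 2 + (M - ℓ) * K ^ 2 = M * K) :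
    (K + θ) * (M * K - (ℓ * θ + (M - ℓ) * K)) = M * K * (K - 1) := by
  linear_combination -hc

theorem constraint_of_sq_eq (T : R) (hM : M = T * (K ^ 2 - K + 1)) (hθ : θ ^ 2 = K - 1) :
    (M - T) * θ ^ 2 + (M - (M - T)) * K ^ 2 = M * K := by
  linear_combination (M - T) * hθ - hM

end CommRing

section OrderedField

variable {R : Type*} [Field R] [LinearOrder R] [IsStrictOrderedRing R] {M K ℓ θ : R}

/-- The objective `ℓθ + (M − ℓ)K` on the equality constraint, as a function of `θ`. -/
def reducedObjective (M K θ : R) : R :=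
  M * K - M * K * (K - 1) / (K + θ)

theorem objective_eq_reducedObjective (hK : 0 < K) (hθ : 0 ≤ θ)
    (hc : ℓ * θ ^ 2 + (M - ℓ) * K ^ 2 = M * K) :
    ℓ * θ + (M - ℓ) * K = reducedObjective M K θ := by
  have hKθ : K + θ ≠ 0 := by positivity
  rw [reducedObjective, ← add_mul_objective_eq hc, mul_div_cancel_left₀ _ hKθ]
  ring

theorem strictMonoOn_reducedObjective (hM : 0 < M) (hK : 1 < K) :
    StrictMonoOn (reducedObjective M K) (Set.Ici 0) := by
  intro a ha b _ hab
  have hc : 0 < M * K * (K - 1) := by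
    have := sub_pos.2 hK
    positivity
  have ha' : 0 < K + a := by simp only [Set.mem_Ici] at ha; linarith
  simpa [reducedObjective] using div_lt_div_of_pos_left hc ha' (by linarith)

theorem sq_le_of_quartic (hM : 0 < M) (hK : 1 < K) (hc : ℓ * θ ^ 2 + (M - ℓ) * K ^ 2 = M * K)
    (hq : ℓ * θ ^ 4 + (M - ℓ) * K ^ 4 ≥ M * K * (2 * K - 1)) :
    θ ^ 2 ≤ K - 1 := by
  have hpos : 0 < M * K * (K - 1) := by
    have := sub_pos.2 hK
    have : 0 < K := by linarith
    positivity
  have := quartic_sub_eq hc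
  nlinarith

theorem eq_sub_of_constraint {T : R} (hM : M = T * (K ^ 2 - K + 1)) (hθ : θ ^ 2 = K - 1)
    (hc : ℓ * θ ^ 2 + (M - ℓ) * K ^ 2 = M * K) :
    ℓ = M - T := by
  have hq : K ^ 2 - K + 1 ≠ 0 := by nlinarith [sq_nonneg (2 * K - 1)]
  apply mul_right_cancel₀ hq
  linear_combination -hc + ℓ * hθ - hM

end OrderedField

section Real

variable {M K T ℓ θ : ℝ}

theorem reducedObjective_sqrt_sub_one (hK : 1 ≤ K) (hM : M = T * (K ^ 2 - K + 1)) :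
    reducedObjective M K √(K - 1) = T * K + T * (K ^ 2 - K) * √(K - 1) := by
  have hs := Real.sq_sqrt (sub_nonneg.2 hK)
  have hKs : K + √(K - 1) ≠ 0 := by positivity
  have hloss : M * K * (K - 1) / (K + √(K - 1)) = T * K * (K - 1) * (K - √(K - 1)) := by
    rw [div_eq_iff hKs]
    linear_combination hM * K * (K - 1) + T * K * (K - 1) * hs
  rw [reducedObjective, hloss, hM]
  ring

theorem objective_le_and_eq_iff (hT : 0 < T) (hK : 1 < K) (hM : M = T * (K ^ 2 - K + 1))
    (hθ : 0 ≤ θ) (hc : ℓ * θ ^ 2 + (M - ℓ) * K ^ 2 = M * K)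
    (hq : ℓ * θ ^ 4 + (M - ℓ) * K ^ 4 ≥ M * K * (2 * K - 1)) :
    ℓ * θ + (M - ℓ) * K ≤ T * K + T * (K ^ 2 - K) * √(K - 1) ∧
      (ℓ * θ + (M - ℓ) * K = T * K + T * (K ^ 2 - K) * √(K - 1) ↔
        θ = √(K - 1) ∧ ℓ = M - T) := by
  have hMpos : 0 < M := by
    rw [hM]
    exact mul_pos hT (by nlinarith)
  have hθs : θ ≤ √(K - 1) :=
    (Real.le_sqrt hθ (by linarith)).2 (sq_le_of_quartic hMpos hK hc hq)
  have hmono := strictMonoOn_reducedObjective hMpos hK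
  have hs : √(K - 1) ∈ Set.Ici 0 := Real.sqrt_nonneg _
  rw [objective_eq_reducedObjective (by linarith) hθ hc,
    ← reducedObjective_sqrt_sub_one hK.le hM]
  refine ⟨(hmono.le_iff_le hθ hs).2 hθs, fun h => ?_, fun ⟨h, _⟩ => h ▸ rfl⟩
  obtain rfl := hmono.injOn hθ hs h
  exact ⟨rfl, eq_sub_of_constraint hM (Real.sq_sqrt (by linarith)) hc⟩

theorem feasible_sqrt_sub_one (hT : 0 ≤ T) (hK : 1 ≤ K) (hM : M = T * (K ^ 2 - K + 1)) :
    0 ≤ M - T ∧ M - T ≤ M ∧ 0 ≤ √(K - 1) ∧ √(K - 1) ≤ K ∧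
      (M - T) * √(K - 1) ^ 2 + (M - (M - T)) * K ^ 2 = M * K ∧
      (M - T) * √(K - 1) ^ 4 + (M - (M - T)) * K ^ 4 ≥ M * K * (2 * K - 1) ∧
      (M - T) * √(K - 1) + (M - (M - T)) * K = T * K + T * (K ^ 2 - K) * √(K - 1) := by
  have hs := Real.sq_sqrt (sub_nonneg.2 hK)
  have hc := constraint_of_sq_eq T hM hs
  have hMT : M - T = T * (K * (K - 1)) := by rw [hM]; ring
  refine ⟨hMT ▸ mul_nonneg hT (mul_nonneg (by linarith) (by linarith)), by linarith,
    Real.sqrt_nonneg _, ?_, hc, ?_, by linear_combination √(K - 1) * hM⟩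
  · rw [Real.sqrt_le_left (by linarith)]
    nlinarith
  · have := quartic_sub_eq hc
    rw [hs, sub_self, mul_zero] at this
    linarith

end Real

end OneValueOptimization

/-- the one-value reduced optimization problem is maximized uniquely at
θ = √(k−1), ℓ = m − t, with maximal value tk + t(k²−k)√(k−1). -/
theorem one_value_optimization (k t m : ℕ) (hk : 2 ≤ k) (ht : 1 ≤ t)
    (hm : m = t * (k ^ 2 - k + 1)) :
    (∀ ℓ θ : ℝ, 0 ≤ ℓ → ℓ ≤ (m : ℝ) → 0 ≤ θ → θ ≤ (k : ℝ) →
      ℓ * θ ^ 2 + ((m : ℝ) - ℓ) * (k : ℝ) ^ 2 = (m : ℝ) * k →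
      ℓ * θ ^ 4 + ((m : ℝ) - ℓ) * (k : ℝ) ^ 4 ≥ (m : ℝ) * k * (2 * (k : ℝ) - 1) →
      (ℓ * θ + ((m : ℝ) - ℓ) * k ≤
        (t : ℝ) * k + (t : ℝ) * ((k : ℝ) ^ 2 - k) * Real.sqrt ((k : ℝ) - 1) ∧
      (ℓ * θ + ((m : ℝ) - ℓ) * k =
          (t : ℝ) * k + (t : ℝ) * ((k : ℝ) ^ 2 - k) * Real.sqrt ((k : ℝ) - 1) ↔
        θ = Real.sqrt ((k : ℝ) - 1) ∧ ℓ = (m : ℝ) - t))) ∧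
    -- the maximum is attained at the feasible point (ℓ, θ) = (m − t, √(k−1)):
    (0 ≤ (m : ℝ) - t ∧ (m : ℝ) - t ≤ (m : ℝ) ∧
      0 ≤ Real.sqrt ((k : ℝ) - 1) ∧ Real.sqrt ((k : ℝ) - 1) ≤ (k : ℝ) ∧
      ((m : ℝ) - t) * (Real.sqrt ((k : ℝ) - 1)) ^ 2 + ((m : ℝ) - ((m : ℝ) - t)) * (k : ℝ) ^ 2 =
        (m : ℝ) * k ∧
      ((m : ℝ) - t) * (Real.sqrt ((k : ℝ) - 1)) ^ 4 + ((m : ℝ) - ((m : ℝ) - t)) * (k : ℝ) ^ 4 ≥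
        (m : ℝ) * k * (2 * (k : ℝ) - 1) ∧
      ((m : ℝ) - t) * Real.sqrt ((k : ℝ) - 1) + ((m : ℝ) - ((m : ℝ) - t)) * k =
        (t : ℝ) * k + (t : ℝ) * ((k : ℝ) ^ 2 - k) * Real.sqrt ((k : ℝ) - 1)) := by
  have hK : (1 : ℝ) < k := by exact_mod_cast hk
  have hT : (0 : ℝ) < t := by exact_mod_cast ht
  have hM : (m : ℝ) = t * ((k : ℝ) ^ 2 - k + 1) := by
    rw [hm]
    push_cast [Nat.cast_sub (Nat.le_self_pow two_ne_zero k)]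
    ring
  exact ⟨fun ℓ θ _ _ hθ _ hc hq =>
    OneValueOptimization.objective_le_and_eq_iff hT hK hM hθ hc hq,
    OneValueOptimization.feasible_sqrt_sub_one hT.le hK.le hM⟩
end

section
/- For k ≥ 2, suppose Γ is k-regular with m = t(k²−k+1) in its bipartite form and the first m eigenvalues of Γ (nonnegative half of the spectrum) satisfy 0 ≤ λᵢ ≤ k, ∑λᵢ² = mk, and ∑λᵢ⁴ ≥ mk(2k−1), with ∑λᵢ = tk + t(k²−k)√(k−1). Then t of the λᵢ equal k and the rest equal √(k−1). -/
set_option linter.unusedSectionVars false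
open Finset

section Defs
variable {V : Type*} [Fintype V] [DecidableEq V]

/-!
With `s = √(k - 1)`, the quartic `p(x) = (x - s)² (k - x) (x + 2s + k)` is nonnegative on `[0, k]`
and vanishes there only at `s` and `k`. The root `-(2s + k)` is chosen to kill the cubic
coefficient, so `∑ p(λᵢ)` is a combination of `m`, `∑ λᵢ`, `∑ λᵢ²` and `∑ λᵢ⁴`; the hypotheses
force it to be `≤ 0`. Hence every `λᵢ` is `s` or `k`, and `∑ λᵢ² = mk` counts those equal to `k`.
-/

def extremalQuartic (s k x : ℝ) : ℝ := (x - s) ^ 2 * (k - x) * (x + 2 * s + k)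

lemma extremalQuartic_nonneg {s k x : ℝ} (hs : 0 ≤ s) (hx : 0 ≤ x) (hxk : x ≤ k) :
    0 ≤ extremalQuartic s k x := by
  exact mul_nonneg (mul_nonneg (sq_nonneg _) (sub_nonneg.2 hxk)) (by linarith)

lemma eq_or_eq_of_extremalQuartic_eq_zero {s k x : ℝ} (hs : 0 < s) (hx : 0 ≤ x) (hxk : x ≤ k)
    (h : extremalQuartic s k x = 0) : x = k ∨ x = s := by
  have hpos : x + 2 * s + k ≠ 0 := by linarith
  rcases mul_eq_zero.1 h with h | h
  · rcases mul_eq_zero.1 h with h | h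
    · exact .inr (sub_eq_zero.1 (pow_eq_zero_iff two_ne_zero |>.1 h))
    · exact .inl (sub_eq_zero.1 h).symm
  · exact absurd h hpos

lemma sum_extremalQuartic {ι : Type*} (S : Finset ι) (s k : ℝ) (x : ι → ℝ) :
    ∑ i ∈ S, extremalQuartic s k (x i) =
      -∑ i ∈ S, x i ^ 4 + (k ^ 2 + 2 * s * k + 3 * s ^ 2) * ∑ i ∈ S, x i ^ 2
        - 2 * s * (k + s) ^ 2 * ∑ i ∈ S, x i + #S * (s ^ 2 * k * (k + 2 * s)) := by
  have expand : ∀ i, extremalQuartic s k (x i) = -x i ^ 4 + (k ^ 2 + 2 * s * k + 3 * s ^ 2) * x i ^ 2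
      - 2 * s * (k + s) ^ 2 * x i + s ^ 2 * k * (k + 2 * s) := fun i => by
    unfold extremalQuartic; ring
  simp only [expand, sum_add_distrib, sum_sub_distrib, sum_neg_distrib, ← mul_sum, sum_const,
    nsmul_eq_mul]
  ring

-- `∑ p(λᵢ) = 0` for the spectrum with `t` values `k` and `m - t` values `s`.
lemma extremalQuartic_moment_identity {s k t m : ℝ} (hk : k = s ^ 2 + 1) (hm : m = t * (k ^ 2 - k + 1)) :
    (k ^ 2 + 2 * s * k + 3 * s ^ 2) * (m * k) - 2 * s * (k + s) ^ 2 * (t * k + t * (k ^ 2 - k) * s)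
      + m * (s ^ 2 * k * (k + 2 * s)) = m * k * (2 * k - 1) := by
  subst hm hk
  ring

lemma eq_or_eq_of_sum_extremalQuartic_nonpos {ι : Type*} [Fintype ι] {s k : ℝ} {x : ι → ℝ}
    (hs : 0 < s) (hx : ∀ i, 0 ≤ x i) (hxk : ∀ i, x i ≤ k)
    (hsum : ∑ i, extremalQuartic s k (x i) ≤ 0) (i : ι) : x i = k ∨ x i = s := by
  have hnonneg : ∀ i ∈ univ, 0 ≤ extremalQuartic s k (x i) :=
    fun i _ => extremalQuartic_nonneg hs.le (hx i) (hxk i)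
  have hzero := (sum_eq_zero_iff_of_nonneg hnonneg).1 (hsum.antisymm (sum_nonneg hnonneg))
  exact eq_or_eq_of_extremalQuartic_eq_zero hs (hx i) (hxk i) (hzero i (mem_univ i))

lemma sum_comp_of_forall_eq_or_eq {ι : Type*} [Fintype ι] {x : ι → ℝ} {a b : ℝ}
    (h : ∀ i, x i = a ∨ x i = b) (f : ℝ → ℝ) :
    ∑ i, f (x i) = #{i | x i = a} * f a + #{i | x i ≠ a} * f b := by
  rw [← sum_filter_add_sum_filter_not univ (fun i => x i = a)]
  have hb : ∀ i ∈ univ.filter (fun i => x i ≠ a), f (x i) = f b := fun i hi =>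
    by rw [((h i).resolve_left (mem_filter.1 hi).2)]
  rw [sum_congr rfl fun i hi => by rw [(mem_filter.1 hi).2], sum_congr rfl hb]
  simp only [sum_const, nsmul_eq_mul]

theorem equality_case_general (k t m : ℕ) (hk : 2 ≤ k)
    (hm : m = t * (k ^ 2 - k + 1)) (lam : Fin m → ℝ)
    (hnonneg : ∀ i, 0 ≤ lam i) (hle : ∀ i, lam i ≤ k)
    (hsq : ∑ i, (lam i) ^ 2 = (m : ℝ) * k)
    (hquart : ∑ i, (lam i) ^ 4 ≥ (m : ℝ) * k * (2 * (k : ℝ) - 1))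
    (hsum : ∑ i, lam i = (t : ℝ) * k + (t : ℝ) * ((k : ℝ) ^ 2 - k) * Real.sqrt ((k : ℝ) - 1)) :
    (Finset.univ.filter fun i => lam i = (k : ℝ)).card = t ∧
      ∀ i, lam i = (k : ℝ) ∨ lam i = Real.sqrt ((k : ℝ) - 1) := by
  have hk2 : (2 : ℝ) ≤ k := by exact_mod_cast hk
  set s := √((k : ℝ) - 1)
  have hs2 : s ^ 2 = k - 1 := Real.sq_sqrt (by linarith)
  have hs : 0 < s := Real.sqrt_pos.2 (by linarith)
  have hmR : (m : ℝ) = t * ((k : ℝ) ^ 2 - k + 1) := by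
    rw [hm, Nat.cast_mul, Nat.cast_add, Nat.cast_sub (Nat.le_self_pow two_ne_zero k)]
    push_cast; ring
  have hvals : ∀ i, lam i = k ∨ lam i = s := by
    refine eq_or_eq_of_sum_extremalQuartic_nonpos hs hnonneg hle ?_
    rw [sum_extremalQuartic, hsq, hsum, card_univ, Fintype.card_fin]
    linarith [extremalQuartic_moment_identity (by linarith : (k : ℝ) = s ^ 2 + 1) hmR]
  refine ⟨?_, hvals⟩
  have hcount := hsq.symm.trans (sum_comp_of_forall_eq_or_eq hvals (· ^ 2))
  have hcard : (#{i | lam i = k} : ℝ) + #{i | lam i ≠ k} = m := by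
    exact_mod_cast (card_filter_add_card_filter_not _).trans (card_fin m)
  have hpos : (0 : ℝ) < (k : ℝ) ^ 2 - k + 1 := by nlinarith
  -- `N k² + N' (k - 1) = (N + N') k` rearranges to `N (k² - k + 1) = N + N' = m`.
  have hcancel : (#{i | lam i = k} : ℝ) * ((k : ℝ) ^ 2 - k + 1) = t * ((k : ℝ) ^ 2 - k + 1) := by
    linear_combination (-1 : ℝ) * hcount - (k - 1 : ℝ) * hcard + hmR - (#{i | lam i ≠ k} : ℝ) * hs2
  exact_mod_cast mul_right_cancel₀ hpos.ne' hcancel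

/-- equality characterization — if the nonnegative half of the spectrum
of a k-regular bipartite graph attains the bound, then t of the values equal k and
the rest equal √(k−1). -/
theorem equality_case (k t m : ℕ) (hk : 2 ≤ k) (ht : 1 ≤ t)
    (hm : m = t * (k ^ 2 - k + 1)) (lam : Fin m → ℝ)
    (hnonneg : ∀ i, 0 ≤ lam i) (hle : ∀ i, lam i ≤ k)
    (hsq : ∑ i, (lam i) ^ 2 = (m : ℝ) * k)
    (hquart : ∑ i, (lam i) ^ 4 ≥ (m : ℝ) * k * (2 * (k : ℝ) - 1))
    (hsum : ∑ i, lam i = (t : ℝ) * k + (t : ℝ) * ((k : ℝ) ^ 2 - k) * Real.sqrt ((k : ℝ) - 1)) :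
    (Finset.univ.filter fun i => lam i = (k : ℝ)).card = t ∧
      ∀ i, lam i = (k : ℝ) ∨ lam i = Real.sqrt ((k : ℝ) - 1) :=
  equality_case_general k t m hk hm lam hnonneg hle hsq hquart hsum
end Defs
end
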